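/- Let α, β > 0 and let X be a random variable with the Beta(α,β) distribution. Writing X* = log(X/(1−X)) and μ* = ψ(α) − ψ(β), the fourth central moment of X* satisfies E[(X* − μ*)⁴] = ψ'''(α) + ψ'''(β) + 3(ψ'(α) + ψ'(β))², where ψ' and ψ''' are the first and third derivatives of the digamma function ψ. -/

import Mathlib

open MeasureTheory Real

/-- Density of the Beta(a,b) distribution on (0,1). -/
noncomputable def betaDensity (a b : ℝ) : ℝ → ℝ :=
  Set.indicator (Set.Ioo 0 1)
    (fun x => (Real.Gamma (a + b) / (Real.Gamma a * Real.Gamma b)) * x ^ (a - 1) * (1 - x) ^ (b - 1))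

/-- The Beta(a,b) probability measure on ℝ. -/
noncomputable def betaMeasure (a b : ℝ) : Measure ℝ :=
  Measure.withDensity MeasureTheory.volume (fun x => ENNReal.ofReal (betaDensity a b x))

/-- The digamma function: derivative of log ∘ Γ. -/
noncomputable def digamma : ℝ → ℝ := deriv fun x => Real.log (Real.Gamma x)

/-- The trigamma function ψ': derivative of the digamma function. -/
noncomputable def trigamma : ℝ → ℝ := deriv digamma

/-- ψ''': the third derivative of the digamma function. -/
noncomputable def psi3 : ℝ → ℝ := iteratedDeriv 3 digamma

/-! For `X ~ Beta(α, β)` and `-α < t < β`,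
`E[exp (t · logit X)] = E[X ^ t (1 - X) ^ (-t)] = B(α + t, β - t) / B(α, β)`,
so the cumulant generating function of `Y = logit X - μ*` is
`K t = log Γ(α + t) + log Γ(β - t) - log Γ α - log Γ β - μ* t`.
The fourth moment of `Y` is the fourth derivative of `exp ∘ K` at `0`, and since
`K 0 = K' 0 = 0` the chain rule leaves only `K'''' 0 + 3 (K'' 0) ^ 2`,
which is `ψ'''(α) + ψ'''(β) + 3 (ψ'(α) + ψ'(β)) ^ 2`. -/

open Set Filter Topology

noncomputable def logGamma (x : ℝ) : ℝ := log (Gamma x)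

theorem analyticAt_Gamma {x : ℝ} (hx : 0 < x) : AnalyticAt ℝ Gamma x := by
  have hopen : IsOpen {z : ℂ | 0 < z.re} := isOpen_lt continuous_const Complex.continuous_re
  have hdiff : DifferentiableOn ℂ Complex.Gamma {z : ℂ | 0 < z.re} := fun z hz =>
    (Complex.differentiableAt_Gamma z fun m hm => by
      simp only [mem_ofPred_eq, hm, Complex.neg_re, Complex.natCast_re] at hz
      linarith [m.cast_nonneg (α := ℝ)]).differentiableWithinAt
  have hC : AnalyticAt ℂ Complex.Gamma x := hdiff.analyticAt (hopen.mem_nhds (by simpa))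
  simpa only [Complex.Gamma_ofReal, Complex.ofReal_re] using hC.re_ofReal

theorem analyticAt_logGamma {x : ℝ} (hx : 0 < x) : AnalyticAt ℝ logGamma x :=
  (analyticAt_Gamma hx).log (Gamma_pos_of_pos hx)

theorem hasDerivAt_iteratedDeriv_logGamma (n : ℕ) {x : ℝ} (hx : 0 < x) :
    HasDerivAt (iteratedDeriv n logGamma) (iteratedDeriv (n + 1) logGamma x) x := by
  rw [iteratedDeriv_succ, iteratedDeriv_eq_iterate]
  exact ((analyticAt_logGamma hx).iterated_deriv n).differentiableAt.hasDerivAt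

theorem iteratedDeriv_succ_logGamma (n : ℕ) :
    iteratedDeriv (n + 1) logGamma = iteratedDeriv n digamma :=
  iteratedDeriv_succ'

/-- The `n`-th derivative of `t ↦ log Γ(a + t) + log Γ(b - t)`. -/
noncomputable def logGammaAddSubDeriv (n : ℕ) (a b t : ℝ) : ℝ :=
  iteratedDeriv n logGamma (a + t) + (-1) ^ n * iteratedDeriv n logGamma (b - t)

theorem hasDerivAt_logGammaAddSubDeriv (n : ℕ) {a b t : ℝ} (ha : 0 < a + t) (hb : 0 < b - t) :
    HasDerivAt (logGammaAddSubDeriv n a b) (logGammaAddSubDeriv (n + 1) a b t) t := by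
  have hadd := (hasDerivAt_iteratedDeriv_logGamma n ha).comp t ((hasDerivAt_id t).const_add a)
  have hsub := (hasDerivAt_iteratedDeriv_logGamma n hb).comp t ((hasDerivAt_id t).const_sub b)
  exact (hadd.add (hsub.const_mul ((-1) ^ n))).congr_deriv
    (by simp only [logGammaAddSubDeriv, pow_succ]; ring)

theorem eqOn_iteratedDeriv_succ {f g g' : ℝ → ℝ} {U : Set ℝ} (hU : IsOpen U) {n : ℕ}
    (hf : EqOn (iteratedDeriv n f) g U) (hg : ∀ t ∈ U, HasDerivAt g (g' t) t) :
    EqOn (iteratedDeriv (n + 1) f) g' U := fun t ht => by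
  rw [iteratedDeriv_succ]
  exact ((hg t ht).congr_of_eventuallyEq (hf.eventuallyEq_of_mem (hU.mem_nhds ht))).deriv

theorem eqOn_iteratedDeriv_four_exp_comp {G G₁ G₂ G₃ G₄ : ℝ → ℝ} {U : Set ℝ} (hU : IsOpen U)
    (hG : ∀ t ∈ U, HasDerivAt G (G₁ t) t) (hG₁ : ∀ t ∈ U, HasDerivAt G₁ (G₂ t) t)
    (hG₂ : ∀ t ∈ U, HasDerivAt G₂ (G₃ t) t) (hG₃ : ∀ t ∈ U, HasDerivAt G₃ (G₄ t) t) :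
    EqOn (iteratedDeriv 4 fun t => exp (G t))
      (fun t => exp (G t) * (G₄ t + 4 * G₃ t * G₁ t + 3 * G₂ t ^ 2 + 6 * G₂ t * G₁ t ^ 2
        + G₁ t ^ 4)) U := by
  have d₁ : EqOn (iteratedDeriv 1 fun t => exp (G t)) (fun t => exp (G t) * G₁ t) U :=
    eqOn_iteratedDeriv_succ hU (n := 0) (fun _ _ => rfl) fun t ht => (hG t ht).exp
  have d₂ : EqOn (iteratedDeriv 2 fun t => exp (G t))
      (fun t => exp (G t) * (G₂ t + G₁ t ^ 2)) U :=
    eqOn_iteratedDeriv_succ hU d₁ fun t ht =>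
      ((hG t ht).exp.mul (hG₁ t ht)).congr_deriv (by ring)
  have d₃ : EqOn (iteratedDeriv 3 fun t => exp (G t))
      (fun t => exp (G t) * (G₃ t + 3 * G₂ t * G₁ t + G₁ t ^ 3)) U :=
    eqOn_iteratedDeriv_succ hU d₂ fun t ht =>
      ((hG t ht).exp.mul ((hG₂ t ht).add ((hG₁ t ht).pow 2))).congr_deriv <| by
        simp only [Pi.add_apply, Pi.pow_apply, Nat.cast_ofNat, Nat.add_one_sub_one, pow_one]
        ring
  exact eqOn_iteratedDeriv_succ hU d₃ fun t ht =>
    ((hG t ht).exp.mul (((hG₃ t ht).add (((hG₂ t ht).const_mul 3).mul (hG₁ t ht))).add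
      ((hG₁ t ht).pow 3))).congr_deriv <| by
        simp only [Pi.add_apply, Pi.mul_apply, Pi.pow_apply, Nat.cast_ofNat, Nat.add_one_sub_one]
        ring

open ProbabilityTheory (beta beta_eq_betaIntegralReal beta_pos mgf integrableExpSet
  iteratedDeriv_mgf_zero mgf_zero_measure)

theorem integral_Ioo_rpow_mul_one_sub_rpow {a b : ℝ} (ha : 0 < a) (hb : 0 < b) :
    ∫ x in Ioo (0 : ℝ) 1, x ^ (a - 1) * (1 - x) ^ (b - 1) = beta a b := by
  have hC : Complex.betaIntegral a b
      = ((∫ x in (0 : ℝ)..1, x ^ (a - 1) * (1 - x) ^ (b - 1) : ℝ) : ℂ) := by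
    rw [Complex.betaIntegral, ← intervalIntegral.integral_ofReal]
    refine intervalIntegral.integral_congr fun x hx => ?_
    rw [uIcc_of_le zero_le_one] at hx
    simp only [Complex.ofReal_mul, Complex.ofReal_cpow hx.1,
      Complex.ofReal_cpow (sub_nonneg.2 hx.2), Complex.ofReal_sub, Complex.ofReal_one]
  rw [beta_eq_betaIntegralReal a b ha hb, hC, Complex.ofReal_re,
    intervalIntegral.integral_of_le zero_le_one, integral_Ioc_eq_integral_Ioo]

theorem integral_betaMeasure {a b : ℝ} (ha : 0 < a) (hb : 0 < b) (g : ℝ → ℝ) :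
    ∫ x, g x ∂betaMeasure a b
      = (beta a b)⁻¹ * ∫ x in Ioo (0 : ℝ) 1, x ^ (a - 1) * (1 - x) ^ (b - 1) * g x := by
  have hdens : ∀ x, betaDensity a b x
      = (Ioo (0 : ℝ) 1).indicator
          (fun x => (beta a b)⁻¹ * (x ^ (a - 1) * (1 - x) ^ (b - 1))) x := by
    intro x
    simp only [betaDensity, beta, inv_div, mul_assoc]
  have hdens_nonneg : ∀ x, 0 ≤ betaDensity a b x := fun x => by
    rw [hdens]
    refine indicator_nonneg (fun y hy => ?_) x
    have := (beta_pos ha hb).le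
    have := rpow_nonneg hy.1.le (a - 1)
    have := rpow_nonneg (sub_nonneg.2 hy.2.le) (b - 1)
    positivity
  have hmeas : Measurable (betaDensity a b) :=
    (Measurable.indicator (by fun_prop) measurableSet_Ioo)
  rw [betaMeasure, integral_withDensity_eq_integral_toReal_smul hmeas.ennreal_ofReal
    (ae_of_all _ fun _ => ENNReal.ofReal_lt_top), ← integral_const_mul,
    ← integral_indicator measurableSet_Ioo]
  congr 1 with x
  rw [ENNReal.toReal_ofReal (hdens_nonneg x), smul_eq_mul, hdens]
  by_cases hx : x ∈ Ioo (0 : ℝ) 1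
  · simp only [indicator_of_mem hx]; ring
  · simp only [indicator_of_notMem hx, zero_mul]

noncomputable def betaLogitCgf (a b c t : ℝ) : ℝ :=
  logGamma (a + t) + logGamma (b - t) - logGamma a - logGamma b - c * t

theorem rpow_mul_one_sub_rpow_mul_exp_logit {a b c t x : ℝ} (hx : x ∈ Ioo (0 : ℝ) 1) :
    x ^ (a - 1) * (1 - x) ^ (b - 1) * exp (t * (log (x / (1 - x)) - c))
      = exp (-(c * t)) * (x ^ (a + t - 1) * (1 - x) ^ (b - t - 1)) := by
  have h1x : 0 < 1 - x := sub_pos.2 hx.2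
  simp only [rpow_def_of_pos hx.1, rpow_def_of_pos h1x, log_div hx.1.ne' h1x.ne', ← exp_add]
  ring_nf

theorem mgf_logit_sub_betaMeasure {a b : ℝ} (ha : 0 < a) (hb : 0 < b) (c : ℝ) {t : ℝ}
    (ht : t ∈ Ioo (-a) b) :
    mgf (fun x => log (x / (1 - x)) - c) (betaMeasure a b) t = exp (betaLogitCgf a b c t) := by
  have hat : 0 < a + t := by linarith [ht.1]
  have hbt : 0 < b - t := sub_pos.2 ht.2
  rw [mgf, integral_betaMeasure ha hb, setIntegral_congr_fun measurableSet_Ioo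
    fun x hx => rpow_mul_one_sub_rpow_mul_exp_logit hx, integral_const_mul,
    integral_Ioo_rpow_mul_one_sub_rpow hat hbt]
  simp only [betaLogitCgf, beta, logGamma, exp_sub, exp_add, exp_neg,
    exp_log (Gamma_pos_of_pos ha), exp_log (Gamma_pos_of_pos hb),
    exp_log (Gamma_pos_of_pos hat), exp_log (Gamma_pos_of_pos hbt), add_add_sub_cancel]
  field_simp

theorem Ioo_subset_integrableExpSet_logit_sub {a b : ℝ} (ha : 0 < a) (hb : 0 < b) (c : ℝ) :
    Ioo (-a) b ⊆ integrableExpSet (fun x => log (x / (1 - x)) - c) (betaMeasure a b) :=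
  fun t ht => Integrable.of_integral_ne_zero <| by
    rw [← mgf, mgf_logit_sub_betaMeasure ha hb c ht]
    exact (exp_pos _).ne'

theorem betaMeasure_ne_zero {a b : ℝ} (ha : 0 < a) (hb : 0 < b) : betaMeasure a b ≠ 0 := by
  intro h
  have h0 := mgf_logit_sub_betaMeasure ha hb 0 (t := 0) ⟨neg_lt_zero.2 ha, hb⟩
  rw [h, mgf_zero_measure] at h0
  exact (exp_pos _).ne h0

theorem hasDerivAt_betaLogitCgf {a b c t : ℝ} (ha : 0 < a + t) (hb : 0 < b - t) :
    HasDerivAt (betaLogitCgf a b c) (logGammaAddSubDeriv 1 a b t - c) t := by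
  have h : HasDerivAt (fun s => logGamma (a + s) + logGamma (b - s))
      (logGammaAddSubDeriv 1 a b t) t := by
    convert hasDerivAt_logGammaAddSubDeriv 0 ha hb using 1
    ext s
    simp [logGammaAddSubDeriv]
  exact (((h.sub_const _).sub_const _).sub ((hasDerivAt_id t).const_mul c)).congr_deriv
    (by ring)

theorem iteratedDeriv_four_exp_betaLogitCgf {a b : ℝ} (ha : 0 < a) (hb : 0 < b) :
    iteratedDeriv 4 (fun t => exp (betaLogitCgf a b (digamma a - digamma b) t)) 0
      = psi3 a + psi3 b + 3 * (trigamma a + trigamma b) ^ 2 := by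
  have hpos : ∀ t ∈ Ioo (-a) b, 0 < a + t ∧ 0 < b - t := fun t ht =>
    ⟨by linarith [ht.1], sub_pos.2 ht.2⟩
  have key := eqOn_iteratedDeriv_four_exp_comp (G := betaLogitCgf a b (digamma a - digamma b))
    isOpen_Ioo
    (fun t ht => hasDerivAt_betaLogitCgf (hpos t ht).1 (hpos t ht).2)
    (fun t ht => (hasDerivAt_logGammaAddSubDeriv 1 (hpos t ht).1 (hpos t ht).2).sub_const _)
    (fun t ht => hasDerivAt_logGammaAddSubDeriv 2 (hpos t ht).1 (hpos t ht).2)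
    (fun t ht => hasDerivAt_logGammaAddSubDeriv 3 (hpos t ht).1 (hpos t ht).2)
    (show (0 : ℝ) ∈ Ioo (-a) b from ⟨neg_lt_zero.2 ha, hb⟩)
  have h₁ : iteratedDeriv 1 logGamma = digamma := iteratedDeriv_succ_logGamma 0
  have h₂ : iteratedDeriv 2 logGamma = trigamma := by
    rw [iteratedDeriv_succ_logGamma, iteratedDeriv_one]; rfl
  have h₄ : iteratedDeriv 4 logGamma = psi3 := iteratedDeriv_succ_logGamma 3
  rw [key]
  norm_num [betaLogitCgf, logGammaAddSubDeriv, h₁, h₂, h₄]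

theorem integral_logit_sub_pow_betaMeasure {a b : ℝ} (ha : 0 < a) (hb : 0 < b) (c : ℝ) (n : ℕ) :
    ∫ x, (log (x / (1 - x)) - c) ^ n ∂betaMeasure a b
      = iteratedDeriv n (fun t => exp (betaLogitCgf a b c t)) 0 := by
  have hU : Ioo (-a) b ∈ 𝓝 (0 : ℝ) := Ioo_mem_nhds (neg_lt_zero.2 ha) hb
  have h0 : (0 : ℝ) ∈
      interior (integrableExpSet (fun x => log (x / (1 - x)) - c) (betaMeasure a b)) :=
    interior_mono (Ioo_subset_integrableExpSet_logit_sub ha hb c) (mem_interior_iff_mem_nhds.2 hU)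
  have hmgf : mgf (fun x => log (x / (1 - x)) - c) (betaMeasure a b)
      =ᶠ[𝓝 0] fun t => exp (betaLogitCgf a b c t) :=
    eventually_of_mem hU fun t ht => mgf_logit_sub_betaMeasure ha hb c ht
  rw [← (hmgf.iteratedDeriv n).eq_of_nhds, iteratedDeriv_mgf_zero h0]
  rfl

theorem beta_logit_fourth_central_moment_general {Ω : Type*} [MeasurableSpace Ω] (P : Measure Ω)
    (X : Ω → ℝ) (α β : ℝ) (hα : 0 < α) (hβ : 0 < β)
    (hX : P.map X = betaMeasure α β) :
    ∫ ω, (Real.log (X ω / (1 - X ω)) - (digamma α - digamma β)) ^ 4 ∂P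
      = psi3 α + psi3 β + 3 * (trigamma α + trigamma β) ^ 2 := by
  have hXm : AEMeasurable X P := by
    by_contra h
    exact betaMeasure_ne_zero hα hβ (by rw [← hX, Measure.map_of_not_aemeasurable h])
  rw [← iteratedDeriv_four_exp_betaLogitCgf hα hβ, ← integral_logit_sub_pow_betaMeasure hα hβ,
    ← hX, integral_map hXm (Measurable.aestronglyMeasurable (by fun_prop))]

theorem beta_logit_fourth_central_moment {Ω : Type*} [MeasurableSpace Ω] (P : Measure Ω)
    [IsProbabilityMeasure P] (X : Ω → ℝ) (α β : ℝ) (hα : 0 < α) (hβ : 0 < β)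
    (hX : P.map X = betaMeasure α β) :
    ∫ ω, (Real.log (X ω / (1 - X ω)) - (digamma α - digamma β)) ^ 4 ∂P
      = psi3 α + psi3 β + 3 * (trigamma α + trigamma β) ^ 2 :=
  beta_logit_fourth_central_moment_general P X α β hα hβ hX
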